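/- For any non-negative integers a, b, c, as an identity of rational numbers: (C(a, b+c) - C(b, a+c))/4^c = \sum_{j=1}^{c} (C(b+1, a+j-1) - C(a+1, b+j-1))/4^j. -/
import Mathlib


/-- The bivariate Catalan number `C(m, n) = (2m)! (2n)! / (m! (m+n)! n!)`, as a rational. -/
def bivariateCatalan (m n : ℕ) : ℚ :=
  ((2 * m).factorial * (2 * n).factorial : ℚ) /
    (m.factorial * (m + n).factorial * n.factorial)

lemma bivariateCatalan_symm (m n : ℕ) : bivariateCatalan m n = bivariateCatalan n m := by
  unfold bivariateCatalan
  rw [Nat.add_comm n m]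
  ring

lemma bc_rec1 (m n : ℕ) :
    bivariateCatalan m (n + 1) * (m + n + 1) = 2 * (2 * n + 1) * bivariateCatalan m n := by
  unfold bivariateCatalan
  have h1 : 2 * (n + 1) = 2 * n + 1 + 1 := by ring
  rw [h1, Nat.factorial_succ (2 * n + 1), Nat.factorial_succ (2 * n),
    show m + (n + 1) = (m + n) + 1 from rfl, Nat.factorial_succ (m + n), Nat.factorial_succ n]
  have hm : (m.factorial : ℚ) ≠ 0 := Nat.cast_ne_zero.mpr m.factorial_ne_zero
  have hmn : ((m + n).factorial : ℚ) ≠ 0 := Nat.cast_ne_zero.mpr (m + n).factorial_ne_zero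
  have hn : (n.factorial : ℚ) ≠ 0 := Nat.cast_ne_zero.mpr n.factorial_ne_zero
  have hmn1 : ((m + n : ℕ) : ℚ) + 1 ≠ 0 := by positivity
  have hn1 : ((n : ℕ) : ℚ) + 1 ≠ 0 := by positivity
  push_cast
  field_simp
  ring

lemma bc_rec2 (m n : ℕ) :
    bivariateCatalan (m + 1) n * (m + n + 1) = 2 * (2 * m + 1) * bivariateCatalan m n := by
  rw [bivariateCatalan_symm (m + 1) n, bivariateCatalan_symm m n]
  linear_combination bc_rec1 n m

lemma bc_key (a b c : ℕ) :
    bivariateCatalan a (b + c + 1) - bivariateCatalan b (a + c + 1)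
      = 4 * (bivariateCatalan a (b + c) - bivariateCatalan b (a + c))
        + (bivariateCatalan (b + 1) (a + c) - bivariateCatalan (a + 1) (b + c)) := by
  have h1 := bc_rec1 a (b + c)
  have h2 := bc_rec1 b (a + c)
  have h3 := bc_rec2 b (a + c)
  have h4 := bc_rec2 a (b + c)
  have hs : ((a : ℚ) + (b + c) + 1) ≠ 0 := by positivity
  have hs' : ((b : ℚ) + (a + c) + 1) ≠ 0 := by positivity
  push_cast at h1 h2 h3 h4 ⊢
  apply mul_right_cancel₀ hs
  linear_combination h1 - h2 - h3 + h4

theorem bivariate_catalan_associator (a b c : ℕ) :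
    (bivariateCatalan a (b + c) - bivariateCatalan b (a + c)) / 4 ^ c
    = ∑ j ∈ Finset.Icc 1 c,
        (bivariateCatalan (b + 1) (a + j - 1) - bivariateCatalan (a + 1) (b + j - 1)) / 4 ^ j := by
  induction c with
  | zero =>
    simp [bivariateCatalan_symm a b]
  | succ c ih =>
    rw [Finset.sum_Icc_succ_top (by omega : 1 ≤ c + 1), ← ih,
      show a + (c + 1) - 1 = a + c from by omega, show b + (c + 1) - 1 = b + c from by omega,
      show b + (c + 1) = b + c + 1 from rfl, show a + (c + 1) = a + c + 1 from rfl, bc_key]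
    have h4 : (4 : ℚ) ^ c ≠ 0 := by positivity
    field_simp
    ring
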